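/- arXiv:1401.7581 — 4 statements merged into one kernel-verified Lean document; each statement's English description precedes it below -/
import Mathlib

section
/- Let P : [0,a] → ℝ be the distribution function of a measure dP = dx + dν where dν is a finite nonnegative Borel measure on (0,a). Then for every function f of locally bounded variation with df = f'_P dP for some f'_P ∈ L²((0,a); dP), and for every x ∈ [0,a], one has |f(x)| ≤ |f(0)| + √(P(a)) · ‖f'_P‖_{L²((0,a);dP)}. In particular such f belongs to L²(0,a) and the embedding of this space into L²(0,a) is continuous. -/
/-!
`f x - f 0` is the `dP`-integral of `g` over `[0, x)`, so it is bounded by the `L¹(dP)` norm of `g`;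
by Cauchy–Schwarz this is at most the square root of the total `dP`-mass of `(0, a)`, which is
`a + ν (0, a) ≤ P a`, times the `L²(dP)` norm of `g`.
-/

open MeasureTheory Set

section

variable {α : Type*} [MeasurableSpace α] {μ : Measure α}

theorem abs_setIntegral_le_integral_abs {g : α → ℝ} (hg : Integrable g μ) (s : Set α) :
    |∫ t in s, g t ∂μ| ≤ ∫ t, |g t| ∂μ :=
  calc |∫ t in s, g t ∂μ| ≤ ∫ t in s, |g t| ∂μ := abs_integral_le_integral_abs
    _ ≤ ∫ t, |g t| ∂μ := setIntegral_le_integral hg.abs (ae_of_all _ fun _ => abs_nonneg _)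

theorem integral_abs_le_sqrt_measureReal_univ_mul_eLpNorm_two [IsFiniteMeasure μ] {g : α → ℝ}
    (hg : MemLp g 2 μ) : ∫ t, |g t| ∂μ ≤ √(μ.real univ) * (eLpNorm g 2 μ).toReal := by
  have hL1 : eLpNorm g 1 μ ≤ eLpNorm g 2 μ * μ univ ^ ((1 : ℝ) / 2) := by
    have := eLpNorm_le_eLpNorm_mul_rpow_measure_univ (μ := μ) one_le_two hg.1
    norm_num at this ⊢
    exact this
  have hL1_toReal : ∫ t, |g t| ∂μ = (eLpNorm g 1 μ).toReal := by
    simp only [← Real.norm_eq_abs, eLpNorm_one_eq_lintegral_enorm,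
      integral_norm_eq_lintegral_enorm hg.1]
  rw [hL1_toReal, Real.sqrt_eq_rpow, measureReal_def, ENNReal.toReal_rpow, mul_comm,
    ← ENNReal.toReal_mul]
  exact ENNReal.toReal_mono (ENNReal.mul_ne_top hg.2.ne (by finiteness)) hL1

end

section

variable (ν : Measure ℝ) [IsFiniteMeasure ν]

instance isFiniteMeasure_volume_add_restrict_Ioo (a : ℝ) :
    IsFiniteMeasure ((volume + ν).restrict (Ioo 0 a)) :=
  isFiniteMeasure_restrict.2 (by simp [Real.volume_Ioo])

theorem measureReal_volume_add_restrict_Ioo_univ {a : ℝ} (ha : 0 ≤ a) :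
    ((volume + ν).restrict (Ioo 0 a)).real univ = a + ν.real (Ioo 0 a) := by
  rw [measureReal_def, Measure.restrict_apply_univ, Measure.add_apply, Real.volume_Ioo, sub_zero,
    ENNReal.toReal_add ENNReal.ofReal_ne_top (measure_ne_top ν _), ENNReal.toReal_ofReal ha,
    measureReal_def]

end

theorem stmt0_general (a : ℝ) (ν : Measure ℝ) [IsFiniteMeasure ν]
    (μ : Measure ℝ) (hμ : μ = (volume + ν).restrict (Set.Ioo 0 a))
    (P : ℝ → ℝ) (hP : ∀ x, P x = x + (ν (Set.Ico 0 x)).toReal)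
    (f g : ℝ → ℝ) (hg : MemLp g 2 μ)
    (hrep : ∀ x ∈ Set.Icc (0:ℝ) a, f x - f 0 = ∫ t in Set.Ico 0 x, g t ∂μ) :
    ∀ x ∈ Set.Icc (0:ℝ) a,
      |f x| ≤ |f 0| + Real.sqrt (P a) * (eLpNorm g 2 μ).toReal := by
  intro x hx
  subst hμ
  have hmass : ((volume + ν).restrict (Ioo 0 a)).real univ ≤ P a := by
    rw [measureReal_volume_add_restrict_Ioo_univ ν (hx.1.trans hx.2), hP]
    exact add_le_add_right (measureReal_mono Ioo_subset_Ico_self) a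
  calc |f x| ≤ |f 0| + |f x - f 0| := by simpa using abs_add_le (f 0) (f x - f 0)
    _ ≤ |f 0| + ∫ t, |g t| ∂(volume + ν).restrict (Ioo 0 a) := by
      rw [hrep x hx]
      gcongr
      exact abs_setIntegral_le_integral_abs (hg.integrable one_le_two) _
    _ ≤ |f 0| + √(((volume + ν).restrict (Ioo 0 a)).real univ) * (eLpNorm g 2 _).toReal := by
      gcongr
      exact integral_abs_le_sqrt_measureReal_univ_mul_eLpNorm_two hg
    _ ≤ |f 0| + √(P a) * (eLpNorm g 2 _).toReal := by gcongr

/-- For `dP = dx + dν` on `(0,a)` with `dν` finite and nonnegative,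
any `f` with `df = f'_P dP`, `f'_P ∈ L²((0,a);dP)` satisfies
`|f(x)| ≤ |f(0)| + √(P(a)) ‖f'_P‖_{L²((0,a);dP)}` for `x ∈ [0,a]`. -/
theorem stmt0 (a : ℝ) (ha : 0 < a) (ν : Measure ℝ) [IsFiniteMeasure ν]
    (μ : Measure ℝ) (hμ : μ = (volume + ν).restrict (Set.Ioo 0 a))
    (P : ℝ → ℝ) (hP : ∀ x, P x = x + (ν (Set.Ico 0 x)).toReal)
    (f g : ℝ → ℝ) (hg : MemLp g 2 μ)
    (hrep : ∀ x ∈ Set.Icc (0:ℝ) a, f x - f 0 = ∫ t in Set.Ico 0 x, g t ∂μ) :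
    ∀ x ∈ Set.Icc (0:ℝ) a,
      |f x| ≤ |f 0| + Real.sqrt (P a) * (eLpNorm g 2 μ).toReal :=
  stmt0_general a ν μ hμ P hP f g hg hrep
end

section
/- Let Σ ⊂ ℝ₊ be closed, ℝ₊ \ Σ = ⋃_k Δ_k with Δ_k = (a_k,b_k) pairwise disjoint, d_k = |Δ_k| → 0 as k → ∞, and let q ≥ 0, q ∈ L¹_loc(ℝ₊). If (1/d_k)∫_{Δ_k} q dx → ∞, then q satisfies Molchanov's condition: for every ε > 0, ∫_x^{x+ε} q(t)dt → ∞ as x → ∞. -/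
/-!
Once `d_k ≤ ε/3` and the average of `q` over `Δ_k` is at least `c` for every component reaching
beyond `x`, the components meeting `(x, x + ε)` but not contained in it lie within `ε/3` of an
endpoint. As `Σ` is null, the contained components have total length at least `ε/3`, so
`∫_x^{x+ε} q ≥ c ε / 3`.
-/

open MeasureTheory Set Filter Function

open scoped ENNReal

theorem mul_measure_iUnion_le_setLIntegral {α ι : Type*} [MeasurableSpace α] [Countable ι]
    {μ : Measure α} {s : ι → Set α} (hs : ∀ i, MeasurableSet (s i))
    (hdisj : Pairwise (Disjoint on s)) {f : α → ℝ≥0∞} {c : ℝ≥0∞}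
    (h : ∀ i, c * μ (s i) ≤ ∫⁻ a in s i, f a ∂μ) :
    c * μ (⋃ i, s i) ≤ ∫⁻ a in ⋃ i, s i, f a ∂μ := by
  rw [measure_iUnion hdisj hs, lintegral_iUnion hs hdisj, ← ENNReal.tsum_mul_left]
  exact ENNReal.tsum_le_tsum h

theorem eventually_atTop_forall_lt_imp {α : Type*} [Preorder α] [Nonempty α] [IsDirectedOrder α]
    {B : ℕ → α} {P : ℕ → Prop} (hP : ∀ᶠ k in atTop, P k) :
    ∀ᶠ x in atTop, ∀ k, x < B k → P k := by
  obtain ⟨K, hK⟩ := eventually_atTop.1 hP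
  obtain ⟨X, hX⟩ := ((Set.finite_lt_nat K).image B).bddAbove
  filter_upwards [eventually_ge_atTop X] with x hx k hk
  refine hK k (not_lt.1 fun hkK => ?_)
  exact (hk.trans_le (hX (mem_image_of_mem B hkK))).not_ge hx

theorem ofReal_sub_two_mul_le_volume_iUnion_Ioo {ι : Type*} {A B : ι → ℝ} {N : Set ℝ}
    (hN : volume N = 0) {x ε δ : ℝ} (hδ : 0 ≤ δ)
    (hcover : Ioo x (x + ε) \ N ⊆ ⋃ k, Ioo (A k) (B k))
    (hshort : ∀ k, x < B k → B k - A k ≤ δ) :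
    ENNReal.ofReal (ε - 2 * δ) ≤
      volume (⋃ k : {k // x ≤ A k ∧ B k ≤ x + ε}, Ioo (A k) (B k)) := by
  set U := ⋃ k : {k // x ≤ A k ∧ B k ≤ x + ε}, Ioo (A k) (B k)
  have hsplit : Ioo x (x + ε) ⊆ N ∪ U ∪ (Ioo x (x + δ) ∪ Ioo (x + ε - δ) (x + ε)) := by
    intro y hy
    by_cases hyN : y ∈ N
    · exact Or.inl (Or.inl hyN)
    obtain ⟨k, hk⟩ := mem_iUnion.1 (hcover ⟨hy, hyN⟩)
    have hlen := hshort k (hy.1.trans hk.2)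
    by_cases hin : x ≤ A k ∧ B k ≤ x + ε
    · exact Or.inl (Or.inr (mem_iUnion.2 ⟨⟨k, hin⟩, hk⟩))
    rcases not_and_or.1 hin with hA | hB
    · exact Or.inr (Or.inl ⟨hy.1, by linarith [hk.2]⟩)
    · exact Or.inr (Or.inr ⟨by linarith [hk.1], hy.2⟩)
  have hvol : ENNReal.ofReal ε ≤ volume U + ENNReal.ofReal (2 * δ) := by
    calc ENNReal.ofReal ε = volume (Ioo x (x + ε)) := by simp
      _ ≤ volume N + volume U + (volume (Ioo x (x + δ)) + volume (Ioo (x + ε - δ) (x + ε))) :=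
        (measure_mono hsplit).trans <| (measure_union_le _ _).trans <|
          add_le_add (measure_union_le _ _) (measure_union_le _ _)
      _ = volume U + ENNReal.ofReal (2 * δ) := by
        rw [hN, zero_add, Real.volume_Ioo, Real.volume_Ioo, add_sub_cancel_left, sub_sub_cancel,
          ← ENNReal.ofReal_add hδ hδ, two_mul]
  rw [ENNReal.ofReal_sub _ (by positivity)]
  exact tsub_le_iff_right.2 hvol

theorem mul_sub_two_mul_le_setIntegral_Ioo {ι : Type*} [Countable ι] {A B : ι → ℝ}
    (hdisj : Pairwise fun i j => Disjoint (Ioo (A i) (B i)) (Ioo (A j) (B j)))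
    {N : Set ℝ} (hN : volume N = 0) {x ε δ c : ℝ} (hδ : 0 ≤ δ) (hc : 0 ≤ c)
    (hcover : Ioo x (x + ε) \ N ⊆ ⋃ k, Ioo (A k) (B k))
    (hshort : ∀ k, x < B k → B k - A k ≤ δ) {q : ℝ → ℝ} (hq0 : ∀ t, 0 ≤ q t)
    (hq : IntegrableOn q (Ioo x (x + ε)))
    (hmean : ∀ k, x ≤ A k → B k ≤ x + ε → c * (B k - A k) ≤ ∫ t in Ioo (A k) (B k), q t) :
    c * (ε - 2 * δ) ≤ ∫ t in Ioo x (x + ε), q t := by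
  have hofReal : ∀ s ⊆ Ioo x (x + ε),
      ENNReal.ofReal (∫ t in s, q t) = ∫⁻ t in s, ENNReal.ofReal (q t) := fun s hs =>
    ofReal_integral_eq_lintegral_ofReal (hq.mono_set hs) (.of_forall hq0)
  set U := ⋃ k : {k // x ≤ A k ∧ B k ≤ x + ε}, Ioo (A k) (B k)
  have hU : U ⊆ Ioo x (x + ε) := iUnion_subset fun k => Ioo_subset_Ioo k.2.1 k.2.2
  have hmeanU : ENNReal.ofReal c * volume U ≤ ∫⁻ t in U, ENNReal.ofReal (q t) := by
    refine mul_measure_iUnion_le_setLIntegral (fun _ => measurableSet_Ioo)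
      (hdisj.comp_of_injective Subtype.val_injective) fun k => ?_
    have hk : Ioo (A k) (B k) ⊆ Ioo x (x + ε) := Ioo_subset_Ioo k.2.1 k.2.2
    rw [Real.volume_Ioo, ← ENNReal.ofReal_mul hc, ← hofReal _ hk]
    exact ENNReal.ofReal_le_ofReal (hmean k k.2.1 k.2.2)
  rw [← ENNReal.ofReal_le_ofReal_iff (setIntegral_nonneg measurableSet_Ioo fun t _ => hq0 t),
    ENNReal.ofReal_mul hc, hofReal _ subset_rfl]
  calc ENNReal.ofReal c * ENNReal.ofReal (ε - 2 * δ)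
      ≤ ENNReal.ofReal c * volume U := by
        gcongr; exact ofReal_sub_two_mul_le_volume_iUnion_Ioo hN hδ hcover hshort
    _ ≤ ∫⁻ t in U, ENNReal.ofReal (q t) := hmeanU
    _ ≤ ∫⁻ t in Ioo x (x + ε), ENNReal.ofReal (q t) := lintegral_mono_set hU

theorem stmt14_general (S : Set ℝ)
    (hSnull : volume S = 0)
    (A B : ℕ → ℝ) (hAB : ∀ k, A k < B k)
    (hdisj : Pairwise fun i j => Disjoint (Set.Ioo (A i) (B i)) (Set.Ioo (A j) (B j)))
    (hcompl : Set.Ioi (0:ℝ) \ S = ⋃ k, Set.Ioo (A k) (B k))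
    (d : ℕ → ℝ) (hd : ∀ k, d k = B k - A k)
    (hd0 : Tendsto d atTop (nhds 0))
    (q : ℝ → ℝ) (hq0 : ∀ x, 0 ≤ q x)
    (hq : LocallyIntegrable q (volume.restrict (Set.Ioi 0)))
    (havg : Tendsto (fun k => (1 / d k) * ∫ x in Set.Ioo (A k) (B k), q x)
      atTop atTop) :
    ∀ ε > (0:ℝ),
      Tendsto (fun x : ℝ => ∫ t in Set.Ioo x (x + ε), q t) atTop atTop := by
  intro ε hε
  refine tendsto_atTop.2 fun M => ?_
  set c := max 0 (3 * M / ε)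
  have hlarge : ∀ᶠ k in atTop, d k ≤ ε / 3 ∧ c ≤ 1 / d k * ∫ t in Ioo (A k) (B k), q t :=
    (hd0.eventually_le_const (by positivity)).and (havg.eventually_ge_atTop c)
  filter_upwards [eventually_ge_atTop 0, eventually_atTop_forall_lt_imp hlarge]
    with x hx hxB
  have hq_on : IntegrableOn q (Ioo x (x + ε)) :=
    (hq.integrableOn_isCompact isCompact_Icc).inter_of_restrict.mono_set
      fun t ht => ⟨Ioo_subset_Icc_self ht, hx.trans_lt ht.1⟩
  have hcover : Ioo x (x + ε) \ S ⊆ ⋃ k, Ioo (A k) (B k) :=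
    hcompl ▸ sdiff_subset_sdiff_left fun t ht => hx.trans_lt ht.1
  calc M = 3 * M / ε * (ε - 2 * (ε / 3)) := by field_simp; ring
    _ ≤ c * (ε - 2 * (ε / 3)) := mul_le_mul_of_nonneg_right (le_max_right _ _) (by linarith)
    _ ≤ ∫ t in Ioo x (x + ε), q t := by
        refine mul_sub_two_mul_le_setIntegral_Ioo hdisj hSnull (by positivity) (le_max_left _ _)
          hcover (fun k hk => hd k ▸ (hxB k hk).1) hq0 hq_on fun k hAk _ => ?_
        have hlen : 0 < d k := hd k ▸ sub_pos.2 (hAB k)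
        have := (hxB k (hAk.trans_lt (hAB k))).2
        rwa [one_div, le_inv_mul_iff₀' hlen, hd] at this

/-- if `Σ ⊂ ℝ₊` is closed of Lebesgue measure zero with
`ℝ₊ \ Σ = ⋃ Δ_k`, `d_k = |Δ_k| → 0`, `q ≥ 0` locally integrable, and
`(1/d_k)∫_{Δ_k} q → ∞`, then `q` satisfies Molchanov's condition. -/
theorem stmt14 (S : Set ℝ) (hScl : IsClosed S) (hSsub : S ⊆ Set.Ioi 0)
    (hSnull : volume S = 0)
    (A B : ℕ → ℝ) (hAB : ∀ k, A k < B k) (hA : ∀ k, 0 ≤ A k)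
    (hdisj : Pairwise fun i j => Disjoint (Set.Ioo (A i) (B i)) (Set.Ioo (A j) (B j)))
    (hcompl : Set.Ioi (0:ℝ) \ S = ⋃ k, Set.Ioo (A k) (B k))
    (d : ℕ → ℝ) (hd : ∀ k, d k = B k - A k)
    (hd0 : Tendsto d atTop (nhds 0))
    (q : ℝ → ℝ) (hq0 : ∀ x, 0 ≤ q x)
    (hq : LocallyIntegrable q (volume.restrict (Set.Ioi 0)))
    (havg : Tendsto (fun k => (1 / d k) * ∫ x in Set.Ioo (A k) (B k), q x)
      atTop atTop) :
    ∀ ε > (0:ℝ),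
      Tendsto (fun x : ℝ => ∫ t in Set.Ioo x (x + ε), q t) atTop atTop :=
  stmt14_general S hSnull A B hAB hdisj hcompl d hd hd0 q hq0 hq havg
end

section
/- Let f be left-continuous of locally bounded variation on ℝ₊ with f(x) − f(y) = ∫_y^x f^{[1]}(t)dt + ∫_{[y,x)} f^{[1]}(t)dν(t) for y < x, where f^{[1]} is continuous on ℝ₊ and dν is a singular (w.r.t. Lebesgue) Borel measure. Then there is a Borel set Σ_min of Lebesgue measure zero supporting dν such that f is differentiable at every x ∉ Σ_min with f'(x) = f^{[1]}(x); in particular f' extends continuously to all of ℝ₊. -/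
/-!
Write `f y - f x = ∫_x^y f1 + R(y)`. The first term has derivative `f1 x` at `x` by the
fundamental theorem of calculus, and `|R(y)| ≤ (sup |f1|) · ν(B(x, |y - x|))`. By
Besicovitch's differentiation theorem the density `ν(B(x, r)) / 2r` of a measure singular to
Lebesgue measure tends to `0` at Lebesgue-a.e. `x`, so `R(y) = o(y - x)` there. `Σ_min` is the
Lebesgue-null exceptional set together with a Lebesgue-null set carrying `ν`.
-/

open MeasureTheory Set Filter Topology Asymptotics Metric

theorem MeasureTheory.Measure.MutuallySingular.exists_null_support_of_ae {α : Type*}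
    [MeasurableSpace α] {μ ν : Measure α} (h : ν ⟂ₘ μ) {p : α → Prop} (hp : ∀ᵐ x ∂μ, p x) :
    ∃ S, MeasurableSet S ∧ μ S = 0 ∧ ν Sᶜ = 0 ∧ ∀ x ∉ S, p x := by
  obtain ⟨T, hpT, hTm, hT⟩ := exists_measurable_superset_of_null (ae_iff.mp hp)
  refine ⟨h.nullSetᶜ ∪ T, h.measurableSet_nullSet.compl.union hTm,
    measure_union_null h.measure_compl_nullSet hT, ?_, fun x hx => ?_⟩
  · rw [compl_union, compl_compl]
    exact measure_mono_null inter_subset_left h.measure_nullSet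
  · by_contra hpx
    exact hx (Or.inr (hpT hpx))

theorem MeasureTheory.Measure.MutuallySingular.ae_measureReal_closedBall_isLittleO
    {ν : Measure ℝ} [IsLocallyFiniteMeasure ν] (h : ν ⟂ₘ volume) :
    ∀ᵐ x, (fun r => ν.real (closedBall x r)) =o[𝓝[>] 0] id := by
  filter_upwards [Besicovitch.ae_tendsto_rnDeriv ν volume, h.rnDeriv_ae_eq_zero]
    with x hx hx0
  rw [hx0] at hx
  have hratio : Tendsto (fun r => ν.real (closedBall x r) / (2 * r)) (𝓝[>] 0) (𝓝 0) := by
    refine ((ENNReal.tendsto_toReal ENNReal.zero_ne_top).comp hx).congr' ?_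
    filter_upwards [self_mem_nhdsWithin] with r hr
    simp [Real.volume_closedBall, ENNReal.toReal_div, measureReal_def,
      ENNReal.toReal_ofReal (le_of_lt hr)]
  rw [isLittleO_iff_tendsto' (by
    filter_upwards [self_mem_nhdsWithin] with r hr h0 using absurd h0 (ne_of_gt hr))]
  convert hratio.const_mul 2 using 2 with r
  · simp only [id]
    field_simp
  · rw [mul_zero]

theorem norm_sub_sub_intervalIntegral_eq {ν : Measure ℝ} {f g : ℝ → ℝ} {s : Set ℝ}
    (hrep : ∀ a ∈ s, ∀ b, a < b →
      f b - f a = (∫ t in Ico a b, g t) + ∫ t in Ico a b, g t ∂ν)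
    {x y : ℝ} (hx : x ∈ s) (hy : y ∈ s) :
    ‖f y - f x - ∫ t in x..y, g t‖ = ‖∫ t in Ico (min x y) (max x y), g t ∂ν‖ := by
  have hincr : ∀ a ∈ s, ∀ b, a < b → f b - f a - ∫ t in a..b, g t = ∫ t in Ico a b, g t ∂ν := by
    intro a ha b hab
    rw [hrep a ha b hab, intervalIntegral.integral_of_le hab.le, integral_Ico_eq_integral_Ioc]
    ring
  rcases lt_trichotomy x y with hxy | rfl | hyx
  · rw [min_eq_left hxy.le, max_eq_right hxy.le, hincr x hx y hxy]
  · simp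
  · rw [min_eq_right hyx.le, max_eq_left hyx.le, ← hincr y hy x hyx, ← norm_neg,
      intervalIntegral.integral_symm]
    ring_nf

theorem isBigO_sub_sub_intervalIntegral_measureReal_closedBall {ν : Measure ℝ}
    [IsLocallyFiniteMeasure ν] {f g : ℝ → ℝ} {s : Set ℝ} {x : ℝ} (hs : s ∈ 𝓝 x)
    (hgx : ContinuousAt g x)
    (hrep : ∀ a ∈ s, ∀ b, a < b →
      f b - f a = (∫ t in Ico a b, g t) + ∫ t in Ico a b, g t ∂ν) :
    (fun y => f y - f x - ∫ t in x..y, g t) =O[𝓝 x]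
      fun y => ν.real (closedBall x |y - x|) := by
  obtain ⟨δ, hδ, hball⟩ := eventually_nhds_iff_ball.mp
    ((hgx.norm.eventually_lt continuousAt_const (lt_add_one ‖g x‖)).and hs)
  refine IsBigO.of_bound (‖g x‖ + 1) (eventually_of_mem (ball_mem_nhds x hδ) fun y hy => ?_)
  have hIco : Ico (min x y) (max x y) ⊆ closedBall x |y - x| := fun t ht =>
    abs_sub_left_of_mem_uIcc (Ico_subset_Icc_self ht)
  have hball' : closedBall x |y - x| ⊆ ball x δ :=
    closedBall_subset_ball (by rwa [mem_ball, Real.dist_eq] at hy)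
  rw [norm_sub_sub_intervalIntegral_eq hrep (hball x (mem_ball_self hδ)).2 (hball y hy).2,
    Real.norm_of_nonneg measureReal_nonneg]
  calc _ ≤ (‖g x‖ + 1) * ν.real (Ico (min x y) (max x y)) :=
        norm_setIntegral_le_of_norm_le_const
          ((measure_mono hIco).trans_lt measure_closedBall_lt_top)
          fun t ht => (hball t (hball' (hIco ht))).1.le
    _ ≤ _ := by gcongr; exact measure_closedBall_lt_top.ne

theorem isLittleO_measureReal_closedBall_abs_sub {ν : Measure ℝ} {x : ℝ}
    (hν : (fun r => ν.real (closedBall x r)) =o[𝓝[>] 0] id) :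
    (fun y => ν.real (closedBall x |y - x|)) =o[𝓝[≠] x] fun y => y - x := by
  have hcont : Tendsto (fun y => |y - x|) (𝓝[≠] x) (𝓝 0) := by
    simpa using ((continuous_sub_right x).abs.tendsto x).mono_left nhdsWithin_le_nhds
  have habs : Tendsto (fun y => |y - x|) (𝓝[≠] x) (𝓝[>] 0) :=
    tendsto_nhdsWithin_of_tendsto_nhds_of_eventually_within _ hcont
      (eventually_nhdsWithin_of_forall fun y hy => abs_pos.2 (sub_ne_zero.2 hy))
  exact isLittleO_abs_right.mp (hν.comp_tendsto habs)

theorem hasDerivAt_of_sub_eq_integral_add_setIntegral {ν : Measure ℝ} [IsLocallyFiniteMeasure ν]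
    {f g : ℝ → ℝ} {s : Set ℝ} {x : ℝ} (hs : s ∈ 𝓝 x) (hg : ContinuousOn g s)
    (hrep : ∀ a ∈ s, ∀ b, a < b →
      f b - f a = (∫ t in Ico a b, g t) + ∫ t in Ico a b, g t ∂ν)
    (hν : (fun r => ν.real (closedBall x r)) =o[𝓝[>] 0] id) :
    HasDerivAt f (g x) x := by
  have hgx : ContinuousAt g x := hg.continuousAt hs
  have hφ : HasDerivAt (fun y => ∫ t in x..y, g t) (g x) x :=
    intervalIntegral.integral_hasDerivAt_right IntervalIntegrable.refl
      ((hg.mono interior_subset).stronglyMeasurableAtFilter isOpen_interior x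
        (mem_interior_iff_mem_nhds.2 hs)) hgx
  suffices hR : HasDerivAt (fun y => f y - f x - ∫ t in x..y, g t) 0 x by
    simpa using (hR.add hφ).add_const (f x)
  have hR : (fun y => f y - f x - ∫ t in x..y, g t) =o[𝓝[≠] x] fun y => y - x :=
    ((isBigO_sub_sub_intervalIntegral_measureReal_closedBall hs hgx hrep).mono
      nhdsWithin_le_nhds).trans_isLittleO (isLittleO_measureReal_closedBall_abs_sub hν)
  -- the remainder vanishes at `x`, so the punctured estimate extends to `𝓝 x`
  rw [hasDerivAt_iff_isLittleO, ← nhdsNE_sup_pure x]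
  simp only [intervalIntegral.integral_same, sub_self, smul_zero, sub_zero]
  exact hR.sup (isLittleO_pure.2 (by simp))

/-- if `f(x) - f(y) = ∫_y^x f^{[1]} dt + ∫_{[y,x)} f^{[1]} dν` with
`f^{[1]}` continuous and `dν` singular w.r.t. Lebesgue measure, then there is a
minimal support `Smin` of `dν` of Lebesgue measure zero such that `f` is
differentiable at every `x ∉ Smin` with `f'(x) = f^{[1]}(x)`. -/
theorem stmt16 (ν : Measure ℝ) [IsLocallyFiniteMeasure ν]
    (hsing : ν.MutuallySingular volume)
    (f f1 : ℝ → ℝ) (hf1cont : ContinuousOn f1 (Set.Ici 0))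
    (hrep : ∀ y x : ℝ, 0 ≤ y → y < x →
      f x - f y = (∫ t in Set.Ico y x, f1 t) + ∫ t in Set.Ico y x, f1 t ∂ν) :
    ∃ Smin : Set ℝ, MeasurableSet Smin ∧ volume Smin = 0 ∧ ν Sminᶜ = 0 ∧
      ∀ x ∈ Set.Ioi (0:ℝ), x ∉ Smin → HasDerivAt f (f1 x) x := by
  obtain ⟨S, hSm, hS0, hνS, hdensity⟩ :=
    hsing.exists_null_support_of_ae hsing.ae_measureReal_closedBall_isLittleO
  refine ⟨S, hSm, hS0, hνS, fun x hx hxS => ?_⟩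
  exact hasDerivAt_of_sub_eq_integral_add_setIntegral (Ici_mem_nhds hx) hf1cont
    (fun a ha b hab => hrep a b ha hab) (hdensity x hxS)
end

section
/- Let q ≡ 0 and P(x) = x + ν(x) on (a,b) with dν singular. Then the equation τu = −(d/dx)(du/dP) = 0 has the two linearly independent solutions u₁(x) = 1 and u₂(x) = P(x). Consequently (by Weyl's alternative for measure Sturm–Liouville operators), when q ∈ L^∞(a,b), the maximal operator H is self-adjoint if and only if for each endpoint, at least one of the functions 1, P fails to be square integrable near that endpoint. -/
/-!
A solution of `τu = 0` has increments `w` times those of `P`, so `u - w • P` is constant and the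
solutions are exactly the combinations `c₁ + c₂ P`. Such a family lies in `L²` near an endpoint
iff `1` and `P` do, which turns Weyl's limit-point condition into the stated one.
-/

open MeasureTheory Set

theorem exists_eq_const_add_mul_of_sub_eq {s : Set ℝ} {u P : ℝ → ℝ} {w : ℝ}
    (h : ∀ x ∈ s, ∀ y ∈ s, y < x → u x - u y = w * (P x - P y)) :
    ∃ c, ∀ x ∈ s, u x = c + w * P x := by
  rcases s.eq_empty_or_nonempty with rfl | ⟨x₀, hx₀⟩
  · exact ⟨0, fun x hx => hx.elim⟩
  refine ⟨u x₀ - w * P x₀, fun x hx => ?_⟩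
  rcases lt_trichotomy x x₀ with hlt | rfl | hgt
  · linear_combination -h x₀ hx₀ x hx hlt
  · ring
  · linear_combination h x hx x₀ hx₀ hgt

theorem forall_memLp_iff_of_ae_eq_const_add_mul {α : Type*} [MeasurableSpace α] {μ : Measure α}
    {p : ENNReal} {S : (α → ℝ) → Prop} {P : α → ℝ} (h₁ : S fun _ => 1) (hP : S P)
    (hspan : ∀ u, S u → ∃ c₁ c₂ : ℝ, (fun x => c₁ + c₂ * P x) =ᵐ[μ] u) :
    (∀ u, S u → MemLp u p μ) ↔ MemLp (fun _ => (1 : ℝ)) p μ ∧ MemLp P p μ := by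
  refine ⟨fun hall => ⟨hall _ h₁, hall _ hP⟩, fun ⟨hone, hPmem⟩ u hu => ?_⟩
  obtain ⟨c₁, c₂, hu_eq⟩ := hspan u hu
  have hcomb : MemLp (fun x => c₁ * 1 + c₂ * P x) p μ :=
    (hone.const_mul c₁).add (hPmem.const_mul c₂)
  simp only [mul_one] at hcomb
  exact hcomb.ae_eq hu_eq

theorem stmt18_general (a b : ℝ) (ν : Measure ℝ)
    (P : ℝ → ℝ)
    (hP : ∀ x ∈ Set.Ioo a b, ∀ y ∈ Set.Ioo a b, y < x →
      P x - P y = (((volume + ν : Measure ℝ) (Set.Ico y x)).toReal))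
    -- a solution of τu = 0 is a function in AC_loc((a,b);dP) whose
    -- quasi-derivative is constant
    (IsSol : (ℝ → ℝ) → Prop)
    (hIsSol : ∀ u, IsSol u ↔ ∃ w : ℝ, ∀ x ∈ Set.Ioo a b, ∀ y ∈ Set.Ioo a b, y < x →
      u x - u y = w * ((volume + ν : Measure ℝ) (Set.Ico y x)).toReal)
    -- Weyl's alternative: self-adjointness ⟺ limit point at both endpoints,
    -- where limit circle at an endpoint means all solutions are L² near it
    (selfadjoint : Prop)
    (hWeyl : selfadjoint ↔
      (¬ ∃ c ∈ Set.Ioo a b, ∀ u, IsSol u → MemLp u 2 (volume.restrict (Set.Ioo a c))) ∧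
      (¬ ∃ c ∈ Set.Ioo a b, ∀ u, IsSol u → MemLp u 2 (volume.restrict (Set.Ioo c b)))) :
    IsSol (fun _ => (1:ℝ)) ∧ IsSol P ∧
    (∀ u, IsSol u → ∃ c₁ c₂ : ℝ, ∀ x ∈ Set.Ioo a b, u x = c₁ + c₂ * P x) ∧
    (selfadjoint ↔
      ((∀ c ∈ Set.Ioo a b,
          ¬ MemLp (fun _ => (1:ℝ)) 2 (volume.restrict (Set.Ioo a c)) ∨
          ¬ MemLp P 2 (volume.restrict (Set.Ioo a c))) ∧
       (∀ c ∈ Set.Ioo a b,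
          ¬ MemLp (fun _ => (1:ℝ)) 2 (volume.restrict (Set.Ioo c b)) ∨
          ¬ MemLp P 2 (volume.restrict (Set.Ioo c b))))) := by
  have sol_one : IsSol fun _ => 1 := (hIsSol _).2 ⟨0, fun x _ y _ _ => by simp⟩
  have sol_P : IsSol P := (hIsSol _).2 ⟨1, fun x hx y hy hyx => by rw [one_mul, hP x hx y hy hyx]⟩
  have span : ∀ u, IsSol u → ∃ c₁ c₂ : ℝ, ∀ x ∈ Ioo a b, u x = c₁ + c₂ * P x := by
    intro u hu
    obtain ⟨w, hw⟩ := (hIsSol u).1 hu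
    obtain ⟨c, hc⟩ := exists_eq_const_add_mul_of_sub_eq (u := u) (P := P) (w := w)
      fun x hx y hy hyx => by rw [hw x hx y hy hyx, hP x hx y hy hyx]
    exact ⟨c, w, hc⟩
  have L2_iff : ∀ s ⊆ Ioo a b, MeasurableSet s → ((∀ u, IsSol u → MemLp u 2 (volume.restrict s)) ↔
      MemLp (fun _ => (1 : ℝ)) 2 (volume.restrict s) ∧ MemLp P 2 (volume.restrict s)) := by
    intro s hs hms
    refine forall_memLp_iff_of_ae_eq_const_add_mul sol_one sol_P fun u hu => ?_
    obtain ⟨c₁, c₂, hu_eq⟩ := span u hu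
    exact ⟨c₁, c₂, ae_restrict_of_forall_mem hms fun x hx => (hu_eq x (hs hx)).symm⟩
  refine ⟨sol_one, sol_P, span, ?_⟩
  simp only [hWeyl, not_exists, not_and]
  exact and_congr
    (forall₂_congr fun c hc =>
      (not_congr (L2_iff _ (Ioo_subset_Ioo_right hc.2.le) measurableSet_Ioo)).trans not_and_or)
    (forall₂_congr fun c hc =>
      (not_congr (L2_iff _ (Ioo_subset_Ioo_left hc.1.le) measurableSet_Ioo)).trans not_and_or)

/-- for `q ≡ 0` and `P = id + ν` with `dν` singular, the solutions
of `τu = 0` (i.e. `u ∈ AC_loc(dP)` with constant quasi-derivative) are spanned by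
`u₁ = 1` and `u₂ = P`; consequently, by Weyl's alternative, the maximal operator
is self-adjoint iff near each endpoint at least one of `1`, `P` is not in `L²`. -/
theorem stmt18 (a b : ℝ) (hab : a < b) (ν : Measure ℝ) [IsLocallyFiniteMeasure ν]
    (hsing : ν.MutuallySingular volume)
    (P : ℝ → ℝ)
    (hP : ∀ x ∈ Set.Ioo a b, ∀ y ∈ Set.Ioo a b, y < x →
      P x - P y = (((volume + ν : Measure ℝ) (Set.Ico y x)).toReal))
    -- a solution of τu = 0 is a function in AC_loc((a,b);dP) whose
    -- quasi-derivative is constant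
    (IsSol : (ℝ → ℝ) → Prop)
    (hIsSol : ∀ u, IsSol u ↔ ∃ w : ℝ, ∀ x ∈ Set.Ioo a b, ∀ y ∈ Set.Ioo a b, y < x →
      u x - u y = w * ((volume + ν : Measure ℝ) (Set.Ico y x)).toReal)
    -- Weyl's alternative: self-adjointness ⟺ limit point at both endpoints,
    -- where limit circle at an endpoint means all solutions are L² near it
    (selfadjoint : Prop)
    (hWeyl : selfadjoint ↔
      (¬ ∃ c ∈ Set.Ioo a b, ∀ u, IsSol u → MemLp u 2 (volume.restrict (Set.Ioo a c))) ∧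
      (¬ ∃ c ∈ Set.Ioo a b, ∀ u, IsSol u → MemLp u 2 (volume.restrict (Set.Ioo c b)))) :
    IsSol (fun _ => (1:ℝ)) ∧ IsSol P ∧
    (∀ u, IsSol u → ∃ c₁ c₂ : ℝ, ∀ x ∈ Set.Ioo a b, u x = c₁ + c₂ * P x) ∧
    (selfadjoint ↔
      ((∀ c ∈ Set.Ioo a b,
          ¬ MemLp (fun _ => (1:ℝ)) 2 (volume.restrict (Set.Ioo a c)) ∨
          ¬ MemLp P 2 (volume.restrict (Set.Ioo a c))) ∧
       (∀ c ∈ Set.Ioo a b,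
          ¬ MemLp (fun _ => (1:ℝ)) 2 (volume.restrict (Set.Ioo c b)) ∨
          ¬ MemLp P 2 (volume.restrict (Set.Ioo c b))))) :=
  stmt18_general a b ν P hP IsSol hIsSol selfadjoint hWeyl
end
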